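/- In the opt-out coupon game, assume 0 < ρ1·M10 − ρ0·M11 < M01·M10 − M00·M11 and 0 < ρ0·M01 − ρ1·M00 < M01·M10 − M00·M11. Then in every Bayesian Nash equilibrium both types of B agent play strictly mixed strategies: 0 < p < 1 and 0 < q < 1. -/

import Mathlib

/-!
The game is symmetric under relabelling the two types and the two signals, so it suffices to
show `0 < q` and `0 < p → q < 1`. If `q = 0`, the opt-out condition keeps A from accusing
type 0 after signal 0, so type 1 lies only if it is accused after signal 1; this forces `p = 1`,
and the two incentive constraints of B combine into `ρ1 M10 - ρ0 M11 ≤ 0`. If `q = 1` and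
`p > 0`, A accuses type 0 after signal 0 and never type 0 after signal 1; for `p < 1` the
type-0 indifference and the type-1 incentive give `ρ1 M10 - ρ0 M11 ≥ M01 M10 - M00 M11`, and
for `p = 1` truth-telling is a loss for type 0 because `ρ0 < M00 + M10`.
-/

/-- Bayesian Nash equilibrium of the opt-out coupon game: `(p, q)` is B's
strategy, `(x0, x1)` (resp. `(y0, y1)`) are A's accusation probabilities after
signal 0 (resp. signal 1), the remaining probability being opting out. -/
def OptOutBNE (D0 D1 M00 M01 M10 M11 ρ0 ρ1 p q x0 x1 y0 y1 : ℝ) : Prop :=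
  p ∈ Set.Icc (0:ℝ) 1 ∧ q ∈ Set.Icc (0:ℝ) 1 ∧
  x0 ∈ Set.Icc (0:ℝ) 1 ∧ x1 ∈ Set.Icc (0:ℝ) 1 ∧
  y0 ∈ Set.Icc (0:ℝ) 1 ∧ y1 ∈ Set.Icc (0:ℝ) 1 ∧
  x0 + x1 ≤ 1 ∧ y0 + y1 ≤ 1 ∧
  -- (i) A's accusation probabilities are a best response
  (∀ x0' x1' y0' y1' : ℝ, x0' ∈ Set.Icc (0:ℝ) 1 → x1' ∈ Set.Icc (0:ℝ) 1 →
    y0' ∈ Set.Icc (0:ℝ) 1 → y1' ∈ Set.Icc (0:ℝ) 1 →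
    x0' + x1' ≤ 1 → y0' + y1' ≤ 1 →
    x0' * (D0 * p * M00 - D1 * (1 - q) * M01)
        + x1' * (-(D0 * p * M10) + D1 * (1 - q) * M11)
        + y0' * (D0 * (1 - p) * M00 - D1 * q * M01)
        + y1' * (-(D0 * (1 - p) * M10) + D1 * q * M11)
      ≤ x0 * (D0 * p * M00 - D1 * (1 - q) * M01)
        + x1 * (-(D0 * p * M10) + D1 * (1 - q) * M11)
        + y0 * (D0 * (1 - p) * M00 - D1 * q * M01)
        + y1 * (-(D0 * (1 - p) * M10) + D1 * q * M11)) ∧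
  -- (ii) p is a best response for the type-0 B agent
  (∀ p' ∈ Set.Icc (0:ℝ) 1,
    p' * (ρ0 - x0 * M00 + x1 * M10) + (1 - p') * (-(y0 * M00) + y1 * M10)
      ≤ p * (ρ0 - x0 * M00 + x1 * M10) + (1 - p) * (-(y0 * M00) + y1 * M10)) ∧
  -- (iii) q is a best response for the type-1 B agent
  (∀ q' ∈ Set.Icc (0:ℝ) 1,
    q' * (ρ1 - y1 * M11 + y0 * M01) + (1 - q') * (-(x1 * M11) + x0 * M01)
      ≤ q * (ρ1 - y1 * M11 + y0 * M01) + (1 - q) * (-(x1 * M11) + x0 * M01))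

/-- A accuses type `b` with probability `xb`, `ab` being the payoff of that accusation, and opts
out (payoff 0) otherwise. -/
def IsBestAccusation (a0 a1 x0 x1 : ℝ) : Prop :=
  0 ≤ x0 ∧ 0 ≤ x1 ∧ x0 + x1 ≤ 1 ∧
    ∀ x0' x1' : ℝ, 0 ≤ x0' → 0 ≤ x1' → x0' + x1' ≤ 1 →
      x0' * a0 + x1' * a1 ≤ x0 * a0 + x1 * a1

namespace IsBestAccusation

variable {a0 a1 x0 x1 : ℝ}

theorem swap (h : IsBestAccusation a0 a1 x0 x1) : IsBestAccusation a1 a0 x1 x0 := by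
  obtain ⟨h0, h1, hs, hmax⟩ := h
  refine ⟨h1, h0, by linarith, fun x1' x0' h1' h0' hs' => ?_⟩
  linarith [hmax x0' x1' h0' h1' (by linarith)]

theorem left_eq_zero_of_neg (h : IsBestAccusation a0 a1 x0 x1) (ha0 : a0 < 0) : x0 = 0 := by
  obtain ⟨h0, h1, hs, hmax⟩ := h
  have : 0 ≤ x0 * a0 := by linarith [hmax 0 x1 le_rfl h1 (by linarith)]
  exact le_antisymm (nonpos_of_mul_nonneg_left this ha0) h0

theorem left_eq_one_of_pos_of_neg (h : IsBestAccusation a0 a1 x0 x1) (ha0 : 0 < a0)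
    (ha1 : a1 < 0) : x0 = 1 := by
  obtain rfl : x1 = 0 := h.swap.left_eq_zero_of_neg ha1
  obtain ⟨-, -, hs, hmax⟩ := h
  have : 1 * a0 ≤ x0 * a0 := by linarith [hmax 1 0 zero_le_one le_rfl (by norm_num)]
  exact le_antisymm (by linarith) (le_of_mul_le_mul_right this ha0)

theorem right_eq_zero_of_neg (h : IsBestAccusation a0 a1 x0 x1) (ha1 : a1 < 0) : x1 = 0 :=
  h.swap.left_eq_zero_of_neg ha1

theorem right_eq_one_of_neg_of_pos (h : IsBestAccusation a0 a1 x0 x1) (ha0 : a0 < 0)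
    (ha1 : 0 < a1) : x1 = 1 :=
  h.swap.left_eq_one_of_pos_of_neg ha1 ha0

end IsBestAccusation

def IsBestMix (u v p : ℝ) : Prop :=
  p ∈ Set.Icc (0:ℝ) 1 ∧ ∀ p' ∈ Set.Icc (0:ℝ) 1, p' * u + (1 - p') * v ≤ p * u + (1 - p) * v

namespace IsBestMix

variable {u v p : ℝ}

theorem le_of_pos (h : IsBestMix u v p) (hp : 0 < p) : v ≤ u := by
  have : 0 ≤ p * (u - v) := by linarith [h.2 0 ⟨le_rfl, zero_le_one⟩]
  linarith [nonneg_of_mul_nonneg_right this hp]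

theorem le_of_lt_one (h : IsBestMix u v p) (hp : p < 1) : u ≤ v := by
  have : 0 ≤ (1 - p) * (v - u) := by linarith [h.2 1 ⟨zero_le_one, le_rfl⟩]
  linarith [nonneg_of_mul_nonneg_right this (sub_pos.2 hp)]

end IsBestMix

theorem coupon_mem_Ioo {M00 M01 M10 M11 ρ0 ρ1 : ℝ} (h00 : 0 < M00) (h10 : 0 < M10)
    (hc1 : 0 < ρ1 * M10 - ρ0 * M11) (hc1' : ρ1 * M10 - ρ0 * M11 < M01 * M10 - M00 * M11)
    (hc2 : 0 < ρ0 * M01 - ρ1 * M00) (hc2' : ρ0 * M01 - ρ1 * M00 < M01 * M10 - M00 * M11) :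
    ρ0 ∈ Set.Ioo 0 (M00 + M10) := by
  have hΔ : 0 < M01 * M10 - M00 * M11 := hc1.trans hc1'
  have key : ρ0 * (M01 * M10 - M00 * M11)
      = M00 * (ρ1 * M10 - ρ0 * M11) + M10 * (ρ0 * M01 - ρ1 * M00) := by ring
  constructor
  · refine pos_of_mul_pos_left ?_ hΔ.le
    rw [key]
    positivity
  · refine lt_of_mul_lt_mul_right ?_ hΔ.le
    rw [key]
    linarith [mul_lt_mul_of_pos_left hc1' h00, mul_lt_mul_of_pos_left hc2' h10]

namespace OptOutBNE

variable {D0 D1 M00 M01 M10 M11 ρ0 ρ1 p q x0 x1 y0 y1 : ℝ}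

theorem symm (h : OptOutBNE D0 D1 M00 M01 M10 M11 ρ0 ρ1 p q x0 x1 y0 y1) :
    OptOutBNE D1 D0 M11 M10 M01 M00 ρ1 ρ0 q p y1 y0 x1 x0 := by
  obtain ⟨hp, hq, hx0, hx1, hy0, hy1, hxs, hys, hA, hBp, hBq⟩ := h
  refine ⟨hq, hp, hy1, hy0, hx1, hx0, by linarith, by linarith, ?_, hBq, hBp⟩
  intro y1' y0' x1' x0' hy1' hy0' hx1' hx0' hys' hxs'
  linarith [hA x0' x1' y0' y1' hx0' hx1' hy0' hy1' (by linarith) (by linarith)]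

theorem isBestAccusation_signal0 (h : OptOutBNE D0 D1 M00 M01 M10 M11 ρ0 ρ1 p q x0 x1 y0 y1) :
    IsBestAccusation (D0 * p * M00 - D1 * (1 - q) * M01)
      (-(D0 * p * M10) + D1 * (1 - q) * M11) x0 x1 := by
  obtain ⟨-, -, hx0, hx1, hy0, hy1, hxs, hys, hA, -⟩ := h
  refine ⟨hx0.1, hx1.1, hxs, fun x0' x1' h0 h1 hs => ?_⟩
  linarith [hA x0' x1' y0 y1 ⟨h0, by linarith⟩ ⟨h1, by linarith⟩ hy0 hy1 hs hys]

theorem isBestAccusation_signal1 (h : OptOutBNE D0 D1 M00 M01 M10 M11 ρ0 ρ1 p q x0 x1 y0 y1) :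
    IsBestAccusation (D0 * (1 - p) * M00 - D1 * q * M01)
      (-(D0 * (1 - p) * M10) + D1 * q * M11) y0 y1 := by
  obtain ⟨-, -, hx0, hx1, hy0, hy1, hxs, hys, hA, -⟩ := h
  refine ⟨hy0.1, hy1.1, hys, fun y0' y1' h0 h1 hs => ?_⟩
  linarith [hA x0 x1 y0' y1' hx0 hx1 ⟨h0, by linarith⟩ ⟨h1, by linarith⟩ hxs hs]

theorem isBestMix_type0 (h : OptOutBNE D0 D1 M00 M01 M10 M11 ρ0 ρ1 p q x0 x1 y0 y1) :
    IsBestMix (ρ0 - x0 * M00 + x1 * M10) (-(y0 * M00) + y1 * M10) p :=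
  ⟨h.1, h.2.2.2.2.2.2.2.2.2.1⟩

theorem isBestMix_type1 (h : OptOutBNE D0 D1 M00 M01 M10 M11 ρ0 ρ1 p q x0 x1 y0 y1) :
    IsBestMix (ρ1 - y1 * M11 + y0 * M01) (-(x1 * M11) + x0 * M01) q :=
  ⟨h.2.1, h.2.2.2.2.2.2.2.2.2.2⟩

theorem q_pos (h : OptOutBNE D0 D1 M00 M01 M10 M11 ρ0 ρ1 p q x0 x1 y0 y1) (hD0 : 0 < D0)
    (h00 : 0 < M00) (h01 : 0 < M01) (h10 : 0 < M10) (h11 : 0 < M11)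
    (hopt0 : D0 * M00 < D1 * M01) (hopt1 : D1 * M11 < D0 * M10) (hρ1 : 0 < ρ1)
    (hΔ : 0 < M01 * M10 - M00 * M11) (hc1 : 0 < ρ1 * M10 - ρ0 * M11) : 0 < q := by
  have hA0 := h.isBestAccusation_signal0
  have hA1 := h.isBestAccusation_signal1
  have hB0 := h.isBestMix_type0
  have hB1 := h.isBestMix_type1
  refine lt_of_le_of_ne hB1.1.1 fun hq0 => ?_
  subst hq0
  have hx0 : x0 = 0 := hA0.left_eq_zero_of_neg <| by
    linarith [mul_nonneg (mul_nonneg hD0.le h00.le) (sub_nonneg.2 hB0.1.2)]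
  subst hx0
  have htype1 : ρ1 + y0 * M01 + x1 * M11 ≤ y1 * M11 := by
    linarith [hB1.le_of_lt_one zero_lt_one]
  have hy1 : 0 < y1 := by
    refine pos_of_mul_pos_left ?_ h11.le
    linarith [mul_nonneg hA1.1 h01.le, mul_nonneg hA0.2.1 h11.le]
  have hp : p = 1 := by
    refine le_antisymm hB0.1.2 (not_lt.1 fun hp => hy1.ne' ?_)
    exact hA1.right_eq_zero_of_neg (by linarith [mul_pos (mul_pos hD0 (sub_pos.2 hp)) h10])
  subst hp
  have hx1 : x1 = 0 := hA0.right_eq_zero_of_neg (by linarith)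
  subst hx1
  have htype0 : y1 * M10 ≤ ρ0 + y0 * M00 := by
    linarith [hB0.le_of_pos zero_lt_one]
  linarith [mul_le_mul_of_nonneg_right htype1 h10.le, mul_le_mul_of_nonneg_right htype0 h11.le,
    mul_nonneg hA1.1 hΔ.le]

theorem q_lt_one_of_pos (h : OptOutBNE D0 D1 M00 M01 M10 M11 ρ0 ρ1 p q x0 x1 y0 y1)
    (hD0 : 0 < D0) (hD1 : 0 < D1) (h00 : 0 < M00) (h01 : 0 < M01) (h10 : 0 < M10)
    (h11 : 0 < M11) (hopt0 : D0 * M00 < D1 * M01)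
    (hc1' : ρ1 * M10 - ρ0 * M11 < M01 * M10 - M00 * M11) (hρ0 : ρ0 < M00 + M10) (hp : 0 < p) :
    q < 1 := by
  have hA0 := h.isBestAccusation_signal0
  have hA1 := h.isBestAccusation_signal1
  have hB0 := h.isBestMix_type0
  have hB1 := h.isBestMix_type1
  refine lt_of_le_of_ne hB1.1.2 fun hq1 => ?_
  subst hq1
  have hy0 : y0 = 0 := hA1.left_eq_zero_of_neg <| by
    linarith [mul_nonneg (mul_nonneg hD0.le h00.le) hB0.1.1]
  have hx1 : x1 = 0 := hA0.right_eq_zero_of_neg <| by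
    linarith [mul_pos (mul_pos hD0 hp) h10]
  have hx0 : x0 = 1 := hA0.left_eq_one_of_pos_of_neg
    (by linarith [mul_pos (mul_pos hD0 hp) h00]) (by linarith [mul_pos (mul_pos hD0 hp) h10])
  subst hy0 hx1 hx0
  have htype0 : M00 + y1 * M10 ≤ ρ0 := by linarith [hB0.le_of_pos hp]
  have htype1 : M01 + y1 * M11 ≤ ρ1 := by linarith [hB1.le_of_pos one_pos]
  rcases hB0.1.2.lt_or_eq with hp1 | rfl
  · have htype0' : ρ0 ≤ M00 + y1 * M10 := by linarith [hB0.le_of_lt_one hp1]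
    linarith [mul_le_mul_of_nonneg_right htype1 h10.le,
      mul_le_mul_of_nonneg_right htype0' h11.le]
  · have hy1 : y1 = 1 := hA1.right_eq_one_of_neg_of_pos
      (by linarith [mul_pos hD1 h01]) (by linarith [mul_pos hD1 h11])
    subst hy1
    linarith

end OptOutBNE

theorem optout_BNE_strictly_mixed_general
    (D0 D1 M00 M01 M10 M11 ρ0 ρ1 : ℝ)
    (hD1 : 0 < D1)
    (h00 : 0 < M00) (h01 : 0 < M01) (h10 : 0 < M10) (h11 : 0 < M11)
    (hopt0 : D0 * M00 < D1 * M01) (hopt1 : D1 * M11 < D0 * M10)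
    (hc1 : 0 < ρ1 * M10 - ρ0 * M11)
    (hc1' : ρ1 * M10 - ρ0 * M11 < M01 * M10 - M00 * M11)
    (hc2 : 0 < ρ0 * M01 - ρ1 * M00)
    (hc2' : ρ0 * M01 - ρ1 * M00 < M01 * M10 - M00 * M11) :
    ∀ p q x0 x1 y0 y1 : ℝ,
      OptOutBNE D0 D1 M00 M01 M10 M11 ρ0 ρ1 p q x0 x1 y0 y1 →
      0 < p ∧ p < 1 ∧ 0 < q ∧ q < 1 := by
  intro p q x0 x1 y0 y1 h
  have hD0 : 0 < D0 := pos_of_mul_pos_left (by linarith [mul_pos hD1 h11]) h10.le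
  have hΔ : 0 < M01 * M10 - M00 * M11 := hc1.trans hc1'
  have hΔ_swap : 0 < M10 * M01 - M11 * M00 := by linarith
  have hc1'_swap : ρ0 * M01 - ρ1 * M00 < M10 * M01 - M11 * M00 := by linarith
  have hc2'_swap : ρ1 * M10 - ρ0 * M11 < M10 * M01 - M11 * M00 := by linarith
  have hρ0 := coupon_mem_Ioo h00 h10 hc1 hc1' hc2 hc2'
  have hρ1 := coupon_mem_Ioo h11 h01 hc2 hc1'_swap hc1 hc2'_swap
  have hq := h.q_pos hD0 h00 h01 h10 h11 hopt0 hopt1 hρ1.1 hΔ hc1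
  have hp := h.symm.q_pos hD1 h11 h10 h01 h00 hopt1 hopt0 hρ0.1 hΔ_swap hc2
  exact ⟨hp, h.symm.q_lt_one_of_pos hD1 hD0 h11 h10 h01 h00 hopt1 hc1'_swap hρ1.2 hq, hq,
    h.q_lt_one_of_pos hD0 hD1 h00 h01 h10 h11 hopt0 hc1' hρ0.2 hp⟩

/-- In the opt-out coupon game, under the strict interior feasibility condition,
in every Bayesian Nash equilibrium both types of B agent play strictly mixed
strategies. -/
theorem optout_BNE_strictly_mixed
    (D0 D1 M00 M01 M10 M11 ρ0 ρ1 : ℝ)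
    (hD1 : 0 < D1) (hD : D1 ≤ D0) (hsum : D0 + D1 = 1)
    (h00 : 0 < M00) (h01 : 0 < M01) (h10 : 0 < M10) (h11 : 0 < M11)
    (hopt0 : D0 * M00 < D1 * M01) (hopt1 : D1 * M11 < D0 * M10)
    (hρ0 : 0 < ρ0) (hρ1 : 0 < ρ1)
    (hc1 : 0 < ρ1 * M10 - ρ0 * M11)
    (hc1' : ρ1 * M10 - ρ0 * M11 < M01 * M10 - M00 * M11)
    (hc2 : 0 < ρ0 * M01 - ρ1 * M00)
    (hc2' : ρ0 * M01 - ρ1 * M00 < M01 * M10 - M00 * M11) :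
    ∀ p q x0 x1 y0 y1 : ℝ,
      OptOutBNE D0 D1 M00 M01 M10 M11 ρ0 ρ1 p q x0 x1 y0 y1 →
      0 < p ∧ p < 1 ∧ 0 < q ∧ q < 1 :=
  optout_BNE_strictly_mixed_general D0 D1 M00 M01 M10 M11 ρ0 ρ1 hD1 h00 h01 h10 h11 hopt0 hopt1 hc1
    hc1' hc2 hc2'
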